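/- Let K be a field, d an even positive integer invertible in K, η ∈ K a primitive (d/2)-th root of unity. In the group of birational self-maps of the affine plane restricted to the curve x^d + x^{d/2} + y^d = 0, let ρ be induced by (x,y) ↦ (ηx, y) and σ by (x,y) ↦ (y²/x, y). Then σ² = id, ρ^{d/2} = id, and σ ρ σ = ρ^{−1}; consequently ⟨ρ, σ⟩ is isomorphic to the dihedral group of order d. -/
import Mathlib

private theorem aux_ext6 {K L : Type*} [Field K] [Field L] [Algebra K L]
    {x y : L} (hgen : IntermediateField.adjoin K {x, y} = ⊤)
    {f g : L ≃ₐ[K] L} (hfx : f x = g x) (hfy : f y = g y) : f = g := by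
  refine AlgEquiv.ext fun a => ?_
  let E : IntermediateField K L :=
    Subalgebra.toIntermediateField (AlgHom.equalizer (f : L →ₐ[K] L) (g : L →ₐ[K] L))
      (fun b hb => by
        simp only [AlgHom.mem_equalizer, AlgEquiv.coe_algHom] at hb ⊢
        rw [map_inv₀, map_inv₀, hb])
  have hle : IntermediateField.adjoin K {x, y} ≤ E := by
    rw [IntermediateField.adjoin_le_iff]
    rintro b hb
    rcases hb with rfl | rfl
    · exact hfx
    · exact hfy
  rw [hgen] at hle
  exact hle (IntermediateField.mem_top)

/-- In the function field `L = K(x, y)` of the Takahashi curve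
`x^d + x^(d/2) + y^d = 0`, the automorphisms `ρ : x ↦ ηx, y ↦ y` (with `η` a
primitive `(d/2)`-th root of unity) and `σ : x ↦ y²/x, y ↦ y` satisfy
`σ² = 1`, `ρ^(d/2) = 1`, `σρσ = ρ⁻¹`, and generate a dihedral group of order `d`. -/
theorem stmt_6 {K L : Type*} [Field K] [Field L] [Algebra K L]
    (d : ℕ) (hdeven : Even d) (hd4 : 4 ≤ d) (hdK : (d : K) ≠ 0)
    (η : K) (hη : IsPrimitiveRoot η (d / 2))
    (x y : L) (hx0 : x ≠ 0) (hy0 : y ≠ 0)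
    (hxt : Transcendental K x)
    (hcurve : x ^ d + x ^ (d / 2) + y ^ d = 0)
    (hgen : IntermediateField.adjoin K {x, y} = ⊤)
    (ρ σ : L ≃ₐ[K] L)
    (hρx : ρ x = algebraMap K L η * x) (hρy : ρ y = y)
    (hσx : σ x = y ^ 2 / x) (hσy : σ y = y) :
    σ ^ 2 = 1 ∧ ρ ^ (d / 2) = 1 ∧ σ * ρ * σ = ρ⁻¹ ∧
      Nonempty (Subgroup.closure {ρ, σ} ≃* DihedralGroup (d / 2)) := by
  obtain ⟨m, hm⟩ := hdeven
  set n := d / 2 with hn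
  have hn2 : 2 ≤ n := by omega
  have hdn : d = 2 * n := by omega
  haveI : NeZero n := ⟨by omega⟩
  have hinj : Function.Injective (algebraMap K L) := (algebraMap K L).injective
  have hηn : η ^ n = 1 := hη.pow_eq_one
  have hη0 : η ≠ 0 := hη.ne_zero (by omega)
  have e0 : algebraMap K L η ≠ 0 := fun h => hη0 (hinj (by rw [h, map_zero]))
  -- σ² = 1
  have hσ2 : σ ^ 2 = 1 := by
    refine aux_ext6 hgen ?_ ?_
    · rw [sq, AlgEquiv.mul_apply, hσx, map_div₀, map_pow, hσy, hσx, AlgEquiv.one_apply]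
      field_simp
    · rw [sq, AlgEquiv.mul_apply, hσy, hσy, AlgEquiv.one_apply]
  have hσσ : σ * σ = 1 := by rw [← sq]; exact hσ2
  -- powers of ρ
  have hρk : ∀ k : ℕ, (ρ ^ k) x = algebraMap K L (η ^ k) * x := by
    intro k
    induction k with
    | zero => simp
    | succ k ih =>
      rw [pow_succ, AlgEquiv.mul_apply, hρx, map_mul, AlgEquiv.commutes, ih,
        pow_succ', map_mul, mul_assoc]
  have hρky : ∀ k : ℕ, (ρ ^ k) y = y := by
    intro k
    induction k with
    | zero => simp
    | succ k ih => rw [pow_succ, AlgEquiv.mul_apply, hρy, ih]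
  have hρn : ρ ^ n = 1 := by
    refine aux_ext6 hgen ?_ ?_
    · rw [hρk, hηn, map_one, one_mul, AlgEquiv.one_apply]
    · rw [hρky, AlgEquiv.one_apply]
  -- the braid relation
  have hrel1 : σ * ρ * σ * ρ = 1 := by
    refine aux_ext6 hgen ?_ ?_
    · simp only [AlgEquiv.mul_apply, hρx, hρy, hσx, hσy, map_mul, map_div₀, map_pow,
        AlgEquiv.commutes, AlgEquiv.one_apply]
      field_simp
    · simp only [AlgEquiv.mul_apply, hρy, hσy, AlgEquiv.one_apply]
  have hrel : σ * ρ * σ = ρ⁻¹ := eq_inv_of_mul_eq_one_left hrel1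
  have hσinv : σ⁻¹ = σ := inv_eq_of_mul_eq_one_right hσσ
  have hconj : ∀ a : ℤ, σ * ρ ^ a * σ = ρ ^ (-a) := by
    intro a
    have h2 := map_zpow (MulAut.conj σ) ρ a
    rw [MulAut.conj_apply, MulAut.conj_apply, hσinv, hrel] at h2
    rw [h2, inv_zpow, ← zpow_neg]
  have hcomm : ∀ a : ℤ, ρ ^ a * σ = σ * ρ ^ (-a) := by
    intro a
    have h := hconj (-a)
    rw [neg_neg] at h
    rw [← h, mul_assoc, hσσ, mul_one]
  have hρnz : ρ ^ (n : ℤ) = 1 := by rw [zpow_natCast, hρn]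
  have hz : ∀ a b : ℤ, ((a : ZMod n) = (b : ZMod n)) → ρ ^ a = ρ ^ b := by
    intro a b hab
    obtain ⟨t, ht⟩ := ((ZMod.intCast_eq_intCast_iff a b n).mp hab).dvd
    have hb : b = a + (n : ℤ) * t := by linarith
    rw [hb, zpow_add, zpow_mul, hρnz, one_zpow, mul_one]
  -- the homomorphism from the dihedral group
  let f : DihedralGroup n → (L ≃ₐ[K] L) := fun g =>
    match g with
    | DihedralGroup.r i => ρ ^ (i.val : ℤ)
    | DihedralGroup.sr i => σ * ρ ^ (i.val : ℤ)
  have hmul : ∀ a b, f (a * b) = f a * f b := by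
    rintro (i | i) (j | j)
    · show ρ ^ (((i + j).val : ℤ)) = ρ ^ (i.val : ℤ) * ρ ^ (j.val : ℤ)
      rw [← zpow_add]
      refine hz _ _ ?_
      push_cast [ZMod.natCast_val, ZMod.cast_id]
      first | rfl | ring
    · show σ * ρ ^ (((j - i).val : ℤ)) = ρ ^ (i.val : ℤ) * (σ * ρ ^ (j.val : ℤ))
      rw [← mul_assoc, hcomm, mul_assoc, ← zpow_add]
      refine congrArg _ (hz _ _ ?_)
      push_cast [ZMod.natCast_val, ZMod.cast_id]
      first | rfl | ring
    · show σ * ρ ^ (((i + j).val : ℤ)) = σ * ρ ^ (i.val : ℤ) * ρ ^ (j.val : ℤ)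
      rw [mul_assoc, ← zpow_add]
      refine congrArg _ (hz _ _ ?_)
      push_cast [ZMod.natCast_val, ZMod.cast_id]
      first | rfl | ring
    · show ρ ^ (((j - i).val : ℤ)) = (σ * ρ ^ (i.val : ℤ)) * (σ * ρ ^ (j.val : ℤ))
      symm
      calc (σ * ρ ^ (i.val : ℤ)) * (σ * ρ ^ (j.val : ℤ))
          = σ * (ρ ^ (i.val : ℤ) * σ) * ρ ^ (j.val : ℤ) := by group
        _ = σ * (σ * ρ ^ (-(i.val : ℤ))) * ρ ^ (j.val : ℤ) := by rw [hcomm]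
        _ = (σ * σ) * (ρ ^ (-(i.val : ℤ)) * ρ ^ (j.val : ℤ)) := by group
        _ = ρ ^ (-(i.val : ℤ) + (j.val : ℤ)) := by rw [hσσ, one_mul, zpow_add]
        _ = ρ ^ (((j - i).val : ℤ)) := by
            refine hz _ _ ?_
            push_cast [ZMod.natCast_val, ZMod.cast_id]
            first | rfl | ring
  have hone : f 1 = 1 := by
    show ρ ^ (((0 : ZMod n).val : ℤ)) = 1
    simp [ZMod.val_zero]
  let F : DihedralGroup n →* (L ≃ₐ[K] L) := { toFun := f, map_one' := hone, map_mul' := hmul }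
  -- injectivity
  have hker : ∀ g, F g = 1 → g = 1 := by
    rintro (i | i) h
    · have h' : ρ ^ i.val = 1 := by rw [← zpow_natCast]; exact h
      have hx' : algebraMap K L (η ^ i.val) * x = x := by
        rw [← hρk, h', AlgEquiv.one_apply]
      have h1 : algebraMap K L (η ^ i.val) = 1 :=
        mul_right_cancel₀ hx0 (hx'.trans (one_mul x).symm)
      have hpow1 : η ^ i.val = 1 := hinj (by rw [h1, map_one])
      have hdvd : n ∣ i.val := (IsPrimitiveRoot.pow_eq_one_iff_dvd hη _).mp hpow1
      have hi0 : i.val = 0 := Nat.eq_zero_of_dvd_of_lt hdvd (ZMod.val_lt i)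
      have : i = 0 := by rwa [ZMod.val_eq_zero] at hi0
      rw [this, ← DihedralGroup.one_def]
    · exfalso
      have hc0 : η ^ i.val ≠ 0 := pow_ne_zero _ hη0
      set c : K := η ^ i.val with hc
      have happ : (σ * ρ ^ (i.val : ℤ)) x = algebraMap K L c * (y ^ 2 / x) := by
        rw [zpow_natCast, AlgEquiv.mul_apply, hρk, map_mul, AlgEquiv.commutes, hσx]
      have h' : σ * ρ ^ (i.val : ℤ) = 1 := h
      have hxe : algebraMap K L c * (y ^ 2 / x) = x := by
        rw [← happ, h', AlgEquiv.one_apply]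
      have he : algebraMap K L c * y ^ 2 = x ^ 2 := by
        field_simp at hxe
        linear_combination hxe
      have hyd : (algebraMap K L c) ^ n * y ^ d = x ^ d := by
        have h2n : y ^ d = (y ^ 2) ^ n := by rw [← pow_mul]; congr 1 <;> omega
        calc (algebraMap K L c) ^ n * y ^ d = (algebraMap K L c * y ^ 2) ^ n := by
              rw [h2n, mul_pow]
          _ = (x ^ 2) ^ n := by rw [he]
          _ = x ^ d := by rw [← pow_mul]; congr 1 <;> omega
      apply hxt
      refine ⟨Polynomial.C (c ^ n) * Polynomial.X ^ n
        + Polynomial.C (c ^ n + 1) * Polynomial.X ^ d, ?_, ?_⟩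
      · intro hp
        have h2 := congrArg (fun p => Polynomial.coeff p n) hp
        simp only [Polynomial.coeff_add, Polynomial.coeff_C_mul, Polynomial.coeff_X_pow,
          Polynomial.coeff_zero] at h2
        simp only [if_true, if_neg (show ¬ n = d by omega), mul_one, mul_zero, add_zero] at h2
        exact pow_ne_zero n hc0 h2
      · simp only [map_add, map_mul, Polynomial.aeval_C, Polynomial.aeval_X_pow, Polynomial.aeval_X, map_pow,
          map_one]
        linear_combination ((algebraMap K L c) ^ n) * hcurve - hyd
  have hFinj : Function.Injective F := (injective_iff_map_eq_one F).mpr hker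
  -- closure equals range
  have hr1 : F (DihedralGroup.r 1) = ρ := by
    haveI : Fact (1 < n) := ⟨by omega⟩
    show ρ ^ (((1 : ZMod n).val : ℤ)) = ρ
    rw [ZMod.val_one]
    exact zpow_one ρ
  have hsr0 : F (DihedralGroup.sr 0) = σ := by
    show σ * ρ ^ (((0 : ZMod n).val : ℤ)) = σ
    simp [ZMod.val_zero]
  have hcl : Subgroup.closure {ρ, σ} = F.range := by
    apply le_antisymm
    · rw [Subgroup.closure_le]
      rintro g hg
      rcases hg with rfl | rfl
      · exact ⟨DihedralGroup.r 1, hr1⟩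
      · exact ⟨DihedralGroup.sr 0, hsr0⟩
    · rintro g ⟨a, rfl⟩
      have hρmem : ρ ∈ Subgroup.closure {ρ, σ} :=
        Subgroup.subset_closure (Set.mem_insert _ _)
      have hσmem : σ ∈ Subgroup.closure {ρ, σ} :=
        Subgroup.subset_closure (Set.mem_insert_of_mem _ rfl)
      rcases a with i | i
      · exact Subgroup.zpow_mem _ hρmem _
      · exact Subgroup.mul_mem _ hσmem (Subgroup.zpow_mem _ hρmem _)
  refine ⟨hσ2, hρn, hrel, ⟨?_⟩⟩
  exact (MulEquiv.subgroupCongr hcl).trans (MonoidHom.ofInjective hFinj).symm
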